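/- In the generic mirabolic Hecke algebra ℛ_n over ℂ(q), for every symmetric polynomial p ∈ ℂ(q)[x_1, …, x_n] (i.e. p invariant under all permutations of the variables), the element p(L_1, …, L_n) obtained by evaluating p at the Jucys–Murphy elements lies in the center of ℛ_n. -/

import Mathlib

noncomputable section

/-- The relations of Solomon's presentation of the mirabolic Hecke algebra `R_n(K,q)`,
on generators `T_0, T_1, …, T_{n-1}` (indexed by `Fin n`). -/
inductive SolomonRel (K : Type) [Field K] (q : K) (n : ℕ) :
    FreeAlgebra K (Fin n) → FreeAlgebra K (Fin n) → Prop
  | quad0 (i : Fin n) (hi : i.val = 0) :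
      SolomonRel K q n (FreeAlgebra.ι K i * FreeAlgebra.ι K i)
        ((q - 2) • FreeAlgebra.ι K i + (q - 1) • (1 : FreeAlgebra K (Fin n)))
  | quad (i : Fin n) (hi : 1 ≤ i.val) :
      SolomonRel K q n (FreeAlgebra.ι K i * FreeAlgebra.ι K i)
        ((q - 1) • FreeAlgebra.ι K i + q • (1 : FreeAlgebra K (Fin n)))
  | braid (i j : Fin n) (hi : 1 ≤ i.val) (hij : i.val + 1 = j.val) :
      SolomonRel K q n (FreeAlgebra.ι K i * FreeAlgebra.ι K j * FreeAlgebra.ι K i)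
        (FreeAlgebra.ι K j * FreeAlgebra.ι K i * FreeAlgebra.ι K j)
  | rel4 (i j : Fin n) (hi : i.val = 0) (hj : j.val = 1) :
      SolomonRel K q n
        (FreeAlgebra.ι K i * FreeAlgebra.ι K j * FreeAlgebra.ι K i * FreeAlgebra.ι K j)
        ((q - 1) • (FreeAlgebra.ι K j * FreeAlgebra.ι K i * FreeAlgebra.ι K j +
            FreeAlgebra.ι K j * FreeAlgebra.ι K i) -
          FreeAlgebra.ι K i * FreeAlgebra.ι K j * FreeAlgebra.ι K i)
  | rel5 (i j : Fin n) (hi : i.val = 0) (hj : j.val = 1) :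
      SolomonRel K q n
        (FreeAlgebra.ι K j * FreeAlgebra.ι K i * FreeAlgebra.ι K j * FreeAlgebra.ι K i)
        ((q - 1) • (FreeAlgebra.ι K j * FreeAlgebra.ι K i * FreeAlgebra.ι K j +
            FreeAlgebra.ι K i * FreeAlgebra.ι K j) -
          FreeAlgebra.ι K i * FreeAlgebra.ι K j * FreeAlgebra.ι K i)
  | comm (i j : Fin n) (hij : i.val + 2 ≤ j.val ∨ j.val + 2 ≤ i.val) :
      SolomonRel K q n (FreeAlgebra.ι K i * FreeAlgebra.ι K j)
        (FreeAlgebra.ι K j * FreeAlgebra.ι K i)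

/-- The mirabolic Hecke algebra `R_n(K,q)`, presented by Solomon's relations. -/
abbrev MirabolicHecke (K : Type) [Field K] (q : K) (n : ℕ) : Type :=
  RingQuot (SolomonRel K q n)

/-- The generator `T_i` of the mirabolic Hecke algebra. -/
def MirabolicHecke.T {K : Type} [Field K] {q : K} {n : ℕ} (i : Fin n) :
    MirabolicHecke K q n :=
  RingQuot.mkAlgHom K (SolomonRel K q n) (FreeAlgebra.ι K i)


section JM

local notation "K" => RatFunc ℂ
local notation "q" => (RatFunc.X : RatFunc ℂ)

variable (n : ℕ)

/-- The generic mirabolic Hecke algebra `ℛ_n` over `ℂ(q)`. -/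
abbrev GenMirabolic (n : ℕ) : Type := MirabolicHecke K q n

/-- The generator `T_j` of `ℛ_n`, indexed by a natural number (junk value `0` if `j ≥ n`). -/
def Tnat (j : ℕ) : GenMirabolic n :=
  if h : j < n then MirabolicHecke.T ⟨j, h⟩ else 0

/-- The idempotent `e = q⁻¹(T_0 + 1)` of `ℛ_n`. -/
def eElt : GenMirabolic n := q⁻¹ • (Tnat n 0 + 1)

/-- The Jucys–Murphy element `L_i = q^{1−i}·T_{i−1}⋯T_1·e·T_1⋯T_{i−1}` of `ℛ_n`
(for `1 ≤ i ≤ n`; in particular `L_1 = e`). -/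
def JM (i : ℕ) : GenMirabolic n :=
  (q ^ (1 - (i : ℤ))) •
    (((List.range (i - 1)).reverse.map fun k => Tnat n (k + 1)).prod * eElt n *
      ((List.range (i - 1)).map fun k => Tnat n (k + 1)).prod)

end JM

section Eval

local notation "K" => RatFunc ℂ

/-- Evaluation of a multivariate polynomial `p ∈ ℂ(q)[x_1,…,x_n]` at the Jucys–Murphy
elements `L_1, …, L_n` of `ℛ_n`: each monomial `x_1^{s_1}⋯x_n^{s_n}` is evaluated as the
(ordered) product `L_1^{s_1}⋯L_n^{s_n}`.  Since the `L_i` pairwise commute, this is the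
value of `p` at `(L_1, …, L_n)`. -/
def evalJM (n : ℕ) (p : MvPolynomial (Fin n) K) : GenMirabolic n :=
  ∑ s ∈ p.support,
    MvPolynomial.coeff s p • ((List.finRange n).map fun i => JM n (i.val + 1) ^ s i).prod

end Eval

/-!
Since the `T_i` generate `ℛ_n`, it suffices that `p(L_1, …, L_n)` commutes with each `T_i`.
The Jucys–Murphy elements satisfy `L_{k+1} = q⁻¹ T_k L_k T_k` and commute pairwise, so `p` can
be evaluated at them through a commutative subalgebra. `T_0` commutes with every `L_k` (for `L_2`
this is where the two mixed relations between `T_0` and `T_1` enter). For `i ≥ 1`, `T_i` commutes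
with `L_k` for `k ∉ {i, i+1}` and with `L_i + L_{i+1}` and `L_i L_{i+1}`; a polynomial invariant
under swapping `x_i` and `x_{i+1}` is a polynomial in these (average it with its swap, and write
`x^u y^v + x^v y^u` through the power sums `x^d + y^d`, which satisfy Newton's recursion).
-/

open MvPolynomial

section SwapInvariant

variable {σ τ R : Type*} [CommRing R]

def swapInvariantGenerators (a b : σ) : Set (MvPolynomial σ R) :=
  X '' {j | j ≠ a ∧ j ≠ b} ∪ {X a + X b, X a * X b}

variable {a b : σ}

theorem X_add_X_mem_adjoin_swapInvariantGenerators :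
    X a + X b ∈ Algebra.adjoin R (swapInvariantGenerators (R := R) a b) :=
  Algebra.subset_adjoin (Or.inr (Set.mem_insert _ _))

theorem X_mul_X_mem_adjoin_swapInvariantGenerators :
    X a * X b ∈ Algebra.adjoin R (swapInvariantGenerators (R := R) a b) :=
  Algebra.subset_adjoin (Or.inr (Set.mem_insert_of_mem _ rfl))

theorem X_pow_add_X_pow_mem_adjoin_swapInvariantGenerators (m : ℕ) :
    X a ^ m + X b ^ m ∈ Algebra.adjoin R (swapInvariantGenerators (R := R) a b) := by
  induction m using Nat.twoStepInduction with
  | zero => simpa only [pow_zero] using add_mem (one_mem _) (one_mem _)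
  | one => simpa only [pow_one] using X_add_X_mem_adjoin_swapInvariantGenerators
  | more m hm hm1 =>
    have newton : (X a ^ (m + 2) + X b ^ (m + 2) : MvPolynomial σ R) =
        (X a + X b) * (X a ^ (m + 1) + X b ^ (m + 1)) - X a * X b * (X a ^ m + X b ^ m) := by
      ring
    rw [newton]
    exact sub_mem (mul_mem X_add_X_mem_adjoin_swapInvariantGenerators hm1)
      (mul_mem X_mul_X_mem_adjoin_swapInvariantGenerators hm)

theorem X_pow_mul_X_pow_add_mem_adjoin_swapInvariantGenerators (u v : ℕ) :
    X a ^ u * X b ^ v + X a ^ v * X b ^ u ∈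
      Algebra.adjoin R (swapInvariantGenerators (R := R) a b) := by
  wlog huv : u ≤ v generalizing u v
  · rw [add_comm]; exact this v u (le_of_not_ge huv)
  obtain ⟨d, rfl⟩ := exists_add_of_le huv
  rw [show X a ^ u * X b ^ (u + d) + X a ^ (u + d) * X b ^ u =
      (X a * X b) ^ u * (X a ^ d + X b ^ d) by ring]
  exact mul_mem (pow_mem X_mul_X_mem_adjoin_swapInvariantGenerators u)
    (X_pow_add_X_pow_mem_adjoin_swapInvariantGenerators d)

theorem rename_monomial_one_eq_mul (f : σ → τ) (hab : a ≠ b) (u : σ →₀ ℕ) :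
    rename f (monomial u (1 : R)) =
      X (f a) ^ u a * X (f b) ^ u b * ((u.erase a).erase b).prod fun j k => X (f j) ^ k := by
  rw [monomial_eq, C_1, one_mul, map_finsuppProd, ← Finsupp.mul_prod_erase' u a _ (by simp),
    ← Finsupp.mul_prod_erase' (u.erase a) b _ (by simp), Finsupp.erase_ne hab.symm, mul_assoc]
  simp only [map_pow, rename_X]

variable [DecidableEq σ]

theorem add_rename_swap_mem_adjoin_swapInvariantGenerators (hab : a ≠ b)
    (p : MvPolynomial σ R) :
    p + rename (Equiv.swap a b) p ∈ Algebra.adjoin R (swapInvariantGenerators a b) := by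
  induction p using MvPolynomial.induction_on' with
  | monomial u c =>
    set w := ((u.erase a).erase b).prod fun j k => (X j : MvPolynomial σ R) ^ k
    have hw : w ∈ Algebra.adjoin R (swapInvariantGenerators a b) := by
      refine Subalgebra.prod_mem _ fun j hj => pow_mem (Algebra.subset_adjoin ?_) _
      simp only [Finsupp.support_erase, Finset.mem_erase] at hj
      exact Or.inl ⟨j, ⟨hj.2.1, hj.1⟩, rfl⟩
    have hu : monomial u (1 : R) = X a ^ u a * X b ^ u b * w := by
      simpa using rename_monomial_one_eq_mul (R := R) id hab u
    have hu_swap : rename (Equiv.swap a b) (monomial u (1 : R)) = X b ^ u a * X a ^ u b * w := by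
      rw [rename_monomial_one_eq_mul _ hab, Equiv.swap_apply_left, Equiv.swap_apply_right]
      congr 1
      refine Finsupp.prod_congr fun j hj => ?_
      simp only [Finsupp.support_erase, Finset.mem_erase] at hj
      rw [Equiv.swap_apply_of_ne_of_ne hj.2.1 hj.1]
    rw [← mul_one c, ← smul_eq_mul, ← smul_monomial, map_smul, ← smul_add, hu_swap, hu,
      ← add_mul, mul_comm (X b ^ u a)]
    exact Subalgebra.smul_mem _
      (mul_mem (X_pow_mul_X_pow_add_mem_adjoin_swapInvariantGenerators _ _) hw) c
  | add p q hp hq => rw [map_add, add_add_add_comm]; exact add_mem hp hq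

theorem mem_adjoin_swapInvariantGenerators_of_rename_swap_eq [Invertible (2 : R)] (hab : a ≠ b)
    {p : MvPolynomial σ R} (hp : rename (Equiv.swap a b) p = p) :
    p ∈ Algebra.adjoin R (swapInvariantGenerators a b) := by
  have h2p := add_rename_swap_mem_adjoin_swapInvariantGenerators hab p
  rw [hp, ← two_smul R] at h2p
  simpa only [smul_smul, invOf_mul_self, one_smul] using Subalgebra.smul_mem _ h2p (⅟2 : R)

end SwapInvariant

theorem AlgHom.commute_of_mem_adjoin {R A B : Type*} [CommSemiring R] [Semiring A] [Semiring B]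
    [Algebra R A] [Algebra R B] (f : A →ₐ[R] B) {s : Set A} {t : B}
    (h : ∀ x ∈ s, Commute t (f x)) {p : A} (hp : p ∈ Algebra.adjoin R s) :
    Commute t (f p) := by
  have hfp : f p ∈ Algebra.adjoin R (f '' s) := by
    rw [← AlgHom.map_adjoin]
    exact Subalgebra.mem_map.2 ⟨p, hp, rfl⟩
  refine Algebra.commute_of_mem_adjoin_of_forall_mem_commute hfp ?_
  rintro _ ⟨x, hx, rfl⟩
  exact h x hx

section HeckeIdentities

variable {𝕜 A : Type*} [Field 𝕜] [Ring A] [Algebra 𝕜 A]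

theorem commute_add_smul_conj_of_quadratic {c : 𝕜} (hc : c ≠ 0) {t : A}
    (ht : t * t = (c - 1) • t + c • 1) (L : A) : Commute t (L + c⁻¹ • (t * L * t)) := by
  have left : t * (L + c⁻¹ • (t * L * t)) = t * L + c⁻¹ • ((t * t) * (L * t)) := by
    simp only [mul_add, mul_smul_comm, mul_assoc]
  have right : (L + c⁻¹ • (t * L * t)) * t = L * t + c⁻¹ • ((t * L) * (t * t)) := by
    simp only [add_mul, smul_mul_assoc, mul_assoc]
  rw [Commute, SemiconjBy, left, right, ht]
  simp only [add_mul, mul_add, smul_mul_assoc, mul_smul_comm, one_mul, mul_one, smul_add,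
    smul_smul, inv_mul_cancel₀ hc, one_smul, mul_assoc]
  abel

theorem commute_conj_add_one_of_mirabolic {c : 𝕜} {a b : A}
    (h4 : a * b * a * b = (c - 1) • (b * a * b + b * a) - a * b * a)
    (h5 : b * a * b * a = (c - 1) • (b * a * b + a * b) - a * b * a)
    (hb : b * b = (c - 1) • b + c • 1) : Commute a (b * (a + 1) * b) := by
  have left : a * (b * (a + 1) * b) = a * b * a * b + a * (b * b) := by noncomm_ring
  have right : b * (a + 1) * b * a = b * a * b * a + (b * b) * a := by noncomm_ring
  rw [Commute, SemiconjBy, left, right, h4, h5, hb]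
  simp only [mul_add, add_mul, mul_smul_comm, smul_mul_assoc, mul_one, one_mul, smul_add]
  abel

end HeckeIdentities

section BraidIdentities

variable {A : Type*} [Ring A] {s t L : A}

theorem commute_conj_conj_of_braid (hb : s * t * s = t * s * t) (hL : Commute t L) :
    Commute s (t * (s * L * s) * t) := by
  calc s * (t * (s * L * s) * t)
      = s * t * s * (L * (s * t)) := by noncomm_ring
    _ = t * s * (t * L) * (s * t) := by rw [hb]; noncomm_ring
    _ = t * s * L * (t * s * t) := by rw [hL.eq]; noncomm_ring
    _ = t * (s * L * s) * t * s := by rw [← hb]; noncomm_ring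

theorem commute_conj_of_braid (hb : s * t * s = t * s * t) (hL : Commute t L)
    (hsL : Commute L (s * L * s)) : Commute (s * L * s) (t * (s * L * s) * t) := by
  have left : s * L * s * (t * (s * L * s) * t) = s * t * (L * s * L * s) * (t * s) :=
    calc s * L * s * (t * (s * L * s) * t)
        = s * L * (s * t * s) * L * s * t := by noncomm_ring
      _ = s * (L * t) * s * (t * L) * s * t := by rw [hb]; noncomm_ring
      _ = s * (t * L) * s * (L * t) * s * t := by rw [hL.eq]
      _ = s * t * (L * s * L) * (t * s * t) := by noncomm_ring
      _ = s * t * (L * s * L * s) * (t * s) := by rw [← hb]; noncomm_ring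
  have right : t * (s * L * s) * t * (s * L * s) = s * t * (s * L * s * L) * (t * s) :=
    calc t * (s * L * s) * t * (s * L * s)
        = t * s * L * (s * t * s) * L * s := by noncomm_ring
      _ = t * s * (L * t) * s * (t * L) * s := by rw [hb]; noncomm_ring
      _ = t * s * (t * L) * s * (L * t) * s := by rw [hL.eq]
      _ = (t * s * t) * (L * s * L) * (t * s) := by noncomm_ring
      _ = s * t * (s * L * s * L) * (t * s) := by rw [← hb]; noncomm_ring
  rw [Commute, SemiconjBy, left, right, show L * s * L * s = s * L * s * L by
    simpa only [mul_assoc] using hsL.eq]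

theorem commute_mul_conj_of_commute {t L : A} (hL : Commute L (t * L * t)) :
    Commute t (L * (t * L * t)) := by
  calc t * (L * (t * L * t)) = t * L * t * L * t := by noncomm_ring
    _ = L * (t * L * t) * t := by rw [← hL.eq]

end BraidIdentities

theorem MirabolicHecke.mem_center_of_forall_commute_T {𝕜 : Type} [Field 𝕜] {c : 𝕜}
    {n : ℕ} {x : MirabolicHecke 𝕜 c n} (hx : ∀ i, Commute (MirabolicHecke.T i) x) :
    x ∈ Subalgebra.center 𝕜 (MirabolicHecke 𝕜 c n) := by
  rw [Subalgebra.mem_center_iff]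
  intro y
  obtain ⟨z, rfl⟩ := RingQuot.mkAlgHom_surjective 𝕜 (SolomonRel 𝕜 c n) y
  induction z using FreeAlgebra.induction with
  | grade0 r => rw [AlgHom.commutes]; exact Algebra.commutes r x
  | grade1 i => exact (hx i).eq
  | mul a b ha hb => rw [map_mul, mul_assoc, hb, ← mul_assoc, ha, mul_assoc]
  | add a b ha hb => rw [map_add, add_mul, mul_add, ha, hb]

section JucysMurphy

local notation "K" => RatFunc ℂ
local notation "q" => (RatFunc.X : RatFunc ℂ)

variable {n : ℕ}

theorem Tnat_of_lt {j : ℕ} (h : j < n) : Tnat n j = MirabolicHecke.T ⟨j, h⟩ := dif_pos h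

theorem Tnat_of_le {j : ℕ} (h : n ≤ j) : Tnat n j = 0 := dif_neg h.not_gt

theorem Tnat_mul_self {i : ℕ} (h1 : 1 ≤ i) (h2 : i < n) :
    Tnat n i * Tnat n i = (q - 1) • Tnat n i + q • (1 : GenMirabolic n) := by
  rw [Tnat_of_lt h2]
  simpa [MirabolicHecke.T] using
    RingQuot.mkAlgHom_rel K (s := SolomonRel K q n) (SolomonRel.quad ⟨i, h2⟩ h1)

-- `Tnat n j = 0` for `j ≥ n`, so the relations not involving `T_i²` hold for every `n`.
theorem Tnat_braid {i : ℕ} (h : 1 ≤ i) :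
    Tnat n i * Tnat n (i + 1) * Tnat n i = Tnat n (i + 1) * Tnat n i * Tnat n (i + 1) := by
  rcases lt_or_ge (i + 1) n with hn | hn
  · rw [Tnat_of_lt hn, Tnat_of_lt (by omega)]
    simpa [MirabolicHecke.T] using
      RingQuot.mkAlgHom_rel K (s := SolomonRel K q n)
        (SolomonRel.braid ⟨i, by omega⟩ ⟨i + 1, hn⟩ h rfl)
  · simp [Tnat_of_le hn]

theorem Tnat_rel4 :
    Tnat n 0 * Tnat n 1 * Tnat n 0 * Tnat n 1 =
      (q - 1) • (Tnat n 1 * Tnat n 0 * Tnat n 1 + Tnat n 1 * Tnat n 0) -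
        Tnat n 0 * Tnat n 1 * Tnat n 0 := by
  rcases lt_or_ge 1 n with hn | hn
  · rw [Tnat_of_lt hn, Tnat_of_lt (by omega)]
    simpa [MirabolicHecke.T] using
      RingQuot.mkAlgHom_rel K (s := SolomonRel K q n)
        (SolomonRel.rel4 ⟨0, by omega⟩ ⟨1, hn⟩ rfl rfl)
  · simp [Tnat_of_le hn]

theorem Tnat_rel5 :
    Tnat n 1 * Tnat n 0 * Tnat n 1 * Tnat n 0 =
      (q - 1) • (Tnat n 1 * Tnat n 0 * Tnat n 1 + Tnat n 0 * Tnat n 1) -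
        Tnat n 0 * Tnat n 1 * Tnat n 0 := by
  rcases lt_or_ge 1 n with hn | hn
  · rw [Tnat_of_lt hn, Tnat_of_lt (by omega)]
    simpa [MirabolicHecke.T] using
      RingQuot.mkAlgHom_rel K (s := SolomonRel K q n)
        (SolomonRel.rel5 ⟨0, by omega⟩ ⟨1, hn⟩ rfl rfl)
  · simp [Tnat_of_le hn]

theorem commute_Tnat_Tnat {i j : ℕ} (h : i + 2 ≤ j) : Commute (Tnat n i) (Tnat n j) := by
  rcases lt_or_ge j n with hn | hn
  · rw [Tnat_of_lt hn, Tnat_of_lt (by omega)]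
    simpa [MirabolicHecke.T, Commute, SemiconjBy] using
      RingQuot.mkAlgHom_rel K (s := SolomonRel K q n)
        (SolomonRel.comm ⟨i, by omega⟩ ⟨j, hn⟩ (Or.inl h))
  · rw [Tnat_of_le hn]
    exact Commute.zero_right _

theorem commute_Tnat_zero_conj :
    Commute (Tnat n 0) (Tnat n 1 * (Tnat n 0 + 1) * Tnat n 1) := by
  rcases lt_or_ge 1 n with hn | hn
  · exact commute_conj_add_one_of_mirabolic Tnat_rel4 Tnat_rel5 (Tnat_mul_self le_rfl hn)
  · simp [Tnat_of_le hn]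

theorem JM_one : JM n 1 = eElt n := by simp [JM]

theorem JM_succ {i : ℕ} (h : 1 ≤ i) :
    JM n (i + 1) = q⁻¹ • (Tnat n i * JM n i * Tnat n i) := by
  obtain ⟨m, rfl⟩ : ∃ m, i = m + 1 := ⟨i - 1, by omega⟩
  simp only [JM, Nat.add_sub_cancel, List.range_succ]
  push_cast
  rw [show (1 : ℤ) - (m + 1 + 1) = (1 - (m + 1)) - 1 by ring, zpow_sub₀ RatFunc.X_ne_zero,
    zpow_one]
  simp only [List.map_append, List.reverse_append, List.prod_append, List.map_cons,
    List.map_nil, List.reverse_cons, List.reverse_nil, List.prod_cons, List.prod_nil,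
    List.nil_append, mul_one]
  rw [mul_smul_comm, smul_mul_assoc, smul_smul, div_eq_mul_inv, mul_comm _ q⁻¹]
  simp only [mul_assoc]

theorem commute_Tnat_JM_of_lt {i k : ℕ} (hk : 1 ≤ k) (hki : k < i) :
    Commute (Tnat n i) (JM n k) := by
  induction k, hk using Nat.le_induction with
  | base =>
    rw [JM_one, eElt]
    exact ((commute_Tnat_Tnat (by omega)).symm.add_right (Commute.one_right _)).smul_right _
  | succ k hk ih =>
    have hTk := (commute_Tnat_Tnat (n := n) (by omega : k + 2 ≤ i)).symm
    rw [JM_succ hk]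
    exact ((hTk.mul_right (ih (by omega))).mul_right hTk).smul_right _

theorem commute_Tnat_JM_add_two (i : ℕ) : Commute (Tnat n i) (JM n (i + 2)) := by
  rcases Nat.eq_zero_or_pos i with rfl | hi
  · rw [JM_succ le_rfl, JM_one, eElt, mul_smul_comm, smul_mul_assoc]
    exact (commute_Tnat_zero_conj.smul_right _).smul_right _
  · rw [JM_succ (by omega), JM_succ hi, mul_smul_comm, smul_mul_assoc]
    exact ((commute_conj_conj_of_braid (Tnat_braid hi)
      (commute_Tnat_JM_of_lt hi (by omega))).smul_right _).smul_right _

theorem commute_Tnat_JM_of_add_two_le {i k : ℕ} (hik : i + 2 ≤ k) :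
    Commute (Tnat n i) (JM n k) := by
  induction k, hik using Nat.le_induction with
  | base => exact commute_Tnat_JM_add_two i
  | succ k hik ih =>
    have hTk := commute_Tnat_Tnat (n := n) hik
    rw [JM_succ (by omega)]
    exact ((hTk.mul_right ih).mul_right hTk).smul_right _

theorem commute_Tnat_zero_JM {k : ℕ} (hk : 1 ≤ k) : Commute (Tnat n 0) (JM n k) := by
  rcases hk.eq_or_lt with rfl | hk
  · rw [JM_one, eElt]
    exact ((Commute.refl _).add_right (Commute.one_right _)).smul_right _
  · exact commute_Tnat_JM_of_add_two_le hk

theorem commute_JM_conj {k : ℕ} (hk : 1 ≤ k) :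
    Commute (JM n k) (Tnat n k * JM n k * Tnat n k) := by
  induction k, hk using Nat.le_induction with
  | base =>
    rw [JM_one, eElt, mul_smul_comm, smul_mul_assoc]
    exact ((commute_Tnat_zero_conj.add_left (Commute.one_left _)).smul_right _).smul_left _
  | succ k hk ih =>
    rw [JM_succ hk, mul_smul_comm, smul_mul_assoc]
    exact ((commute_conj_of_braid (Tnat_braid hk) (commute_Tnat_JM_of_lt hk k.lt_succ_self)
      ih).smul_right _).smul_left _

theorem commute_JM_JM_of_le {j k : ℕ} (hj : 1 ≤ j) (hjk : j ≤ k) :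
    Commute (JM n j) (JM n k) := by
  induction k, hjk using Nat.le_induction with
  | base => exact Commute.refl _
  | succ k hjk ih =>
    rw [JM_succ (hj.trans hjk)]
    refine Commute.smul_right ?_ _
    rcases hjk.eq_or_lt with rfl | hlt
    · exact commute_JM_conj hj
    · have hTk := (commute_Tnat_JM_of_lt (n := n) hj hlt).symm
      exact (hTk.mul_right ih).mul_right hTk

theorem commute_JM_JM {j k : ℕ} (hj : 1 ≤ j) (hk : 1 ≤ k) : Commute (JM n j) (JM n k) := by
  rcases le_total j k with hjk | hkj
  · exact commute_JM_JM_of_le hj hjk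
  · exact (commute_JM_JM_of_le hk hkj).symm

theorem commute_Tnat_JM_add_JM_succ {i : ℕ} (hi : 1 ≤ i) :
    Commute (Tnat n i) (JM n i + JM n (i + 1)) := by
  rcases lt_or_ge i n with hn | hn
  · rw [JM_succ hi]
    exact commute_add_smul_conj_of_quadratic RatFunc.X_ne_zero (Tnat_mul_self hi hn) _
  · rw [Tnat_of_le hn]
    exact Commute.zero_left _

theorem commute_Tnat_JM_mul_JM_succ {i : ℕ} (hi : 1 ≤ i) :
    Commute (Tnat n i) (JM n i * JM n (i + 1)) := by
  rw [JM_succ hi, mul_smul_comm]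
  exact (commute_mul_conj_of_commute (commute_JM_conj hi)).smul_right _

variable (n) in
def jmSubalgebra : Subalgebra K (GenMirabolic n) :=
  Algebra.adjoin K (Set.range fun i : Fin n => JM n (i.val + 1))

instance : IsMulCommutative (jmSubalgebra n) :=
  Algebra.isMulCommutative_adjoin K <| by
    rintro _ ⟨i, rfl⟩ _ ⟨j, rfl⟩
    exact (commute_JM_JM (by omega) (by omega)).eq

open scoped IsMulCommutative

variable (n) in
def evalJMHom : MvPolynomial (Fin n) K →ₐ[K] GenMirabolic n :=
  (jmSubalgebra n).val.comp
    (aeval fun i => ⟨JM n (i.val + 1), Algebra.subset_adjoin (Set.mem_range_self i)⟩)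

theorem evalJMHom_X (i : Fin n) : evalJMHom n (X i) = JM n (i.val + 1) := by
  simp [evalJMHom]

theorem evalJMHom_monomial (s : Fin n →₀ ℕ) (c : K) :
    evalJMHom n (monomial s c) =
      c • ((List.finRange n).map fun i => JM n (i.val + 1) ^ s i).prod := by
  rw [evalJMHom, AlgHom.comp_apply, aeval_monomial, Finsupp.prod_fintype _ _ (by simp),
    Fin.prod_univ_def, map_mul, Algebra.algebraMap_eq_smul_one, map_smul, map_one, smul_one_mul,
    map_list_prod, List.map_map]
  rfl

theorem evalJM_eq_evalJMHom (p : MvPolynomial (Fin n) K) : evalJM n p = evalJMHom n p := by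
  conv_rhs => rw [← p.support_sum_monomial_coeff]
  simp only [evalJM, map_sum, evalJMHom_monomial]

theorem commute_Tnat_succ_evalJMHom_of_mem {i : ℕ} (hi : i + 1 < n) {x : MvPolynomial (Fin n) K}
    (hx : x ∈ swapInvariantGenerators (⟨i, by omega⟩ : Fin n) ⟨i + 1, hi⟩) :
    Commute (Tnat n (i + 1)) (evalJMHom n x) := by
  rcases hx with ⟨j, ⟨hji, hji1⟩, rfl⟩ | rfl | rfl
  · rw [evalJMHom_X]
    rcases lt_or_gt_of_ne (show j.val ≠ i from fun h => hji (Fin.ext h)) with h | h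
    · exact commute_Tnat_JM_of_lt (by omega) (by omega)
    · have : j.val ≠ i + 1 := fun h => hji1 (Fin.ext h)
      exact commute_Tnat_JM_of_add_two_le (by omega)
  · rw [map_add, evalJMHom_X, evalJMHom_X]
    exact commute_Tnat_JM_add_JM_succ (by omega)
  · rw [map_mul, evalJMHom_X, evalJMHom_X]
    exact commute_Tnat_JM_mul_JM_succ (by omega)

end JucysMurphy

section Stmt12

local notation "K" => RatFunc ℂ

/-- For every symmetric polynomial `p ∈ ℂ(q)[x_1,…,x_n]`, the evaluation
`p(L_1, …, L_n)` at the Jucys–Murphy elements lies in the center of `ℛ_n`. -/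
theorem evalJM_symmetric_mem_center (n : ℕ) (p : MvPolynomial (Fin n) K)
    (hp : p.IsSymmetric) :
    evalJM n p ∈ Subalgebra.center K (GenMirabolic n) := by
  refine MirabolicHecke.mem_center_of_forall_commute_T fun ⟨i, hi⟩ => ?_
  rw [evalJM_eq_evalJMHom, ← Tnat_of_lt hi]
  cases i with
  | zero =>
    refine (evalJMHom n).commute_of_mem_adjoin (s := Set.range X) ?_
      (by rw [adjoin_range_X]; exact Algebra.mem_top)
    rintro _ ⟨j, rfl⟩
    rw [evalJMHom_X]
    exact commute_Tnat_zero_JM (by omega)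
  | succ i =>
    exact (evalJMHom n).commute_of_mem_adjoin
      (fun x hx => commute_Tnat_succ_evalJMHom_of_mem hi hx)
      (mem_adjoin_swapInvariantGenerators_of_rename_swap_eq (by simp [Fin.ext_iff]) (hp _))

end Stmt12
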